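/- For r > 0, τ_i > 0, and b ∈ ℝ, with a = r²/4 and c = a/τ_i = r²/(4τ_i), ∫_α^{α+τ_i} e^{−r²/(4(α+τ_i−τ))} (b + α + τ_i − τ)²/(α+τ_i−τ)² dτ = (τ_i + b²/a) e^{−c} − E₁(c)(a − 2b). -/

import Mathlib

/-!
After the substitution `σ = α + τᵢ - τ` the integral becomes `∫₀^τᵢ e^{-a/σ} (b + σ)² / σ² dσ`,
and `F σ = (σ + b²/a) e^{-a/σ} + (2b - a) E₁(a/σ)` is a primitive of this integrand on `(0, ∞)`,
because `d/dσ E₁(a/σ) = e^{-a/σ}/σ`. Near `0` the integrand is bounded, since `e^{-a/σ} ≤ 2σ²/a²`,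
and `F σ → 0` as `σ → 0⁺`, since `0 ≤ E₁ u ≤ e^{-u}/u`. Hence the integral is `F τᵢ`.
-/

open Real MeasureTheory

noncomputable def E1 (x : ℝ) : ℝ := ∫ t in Set.Ioi x, Real.exp (-t) / t

open Set Filter Topology intervalIntegral

lemma measurable_exp_neg_div_self : Measurable fun t : ℝ => exp (-t) / t :=
  (measurable_exp.comp measurable_neg).div measurable_id

lemma exp_neg_div_self_le_exp_neg_div {x t : ℝ} (hx : 0 < x) (ht : x ≤ t) :
    exp (-t) / t ≤ exp (-t) / x :=
  div_le_div_of_nonneg_left (exp_pos _).le hx ht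

lemma integrableOn_exp_neg_div_self_Ioi {x : ℝ} (hx : 0 < x) :
    IntegrableOn (fun t => exp (-t) / t) (Ioi x) := by
  refine ((integrableOn_exp_neg_Ioi x).div_const x).mono'
    measurable_exp_neg_div_self.aestronglyMeasurable ?_
  filter_upwards [ae_restrict_mem measurableSet_Ioi] with t (ht : x < t)
  rw [norm_of_nonneg (div_nonneg (exp_pos _).le (hx.trans ht).le)]
  exact exp_neg_div_self_le_exp_neg_div hx ht.le

lemma E1_nonneg {x : ℝ} (hx : 0 < x) : 0 ≤ E1 x :=
  setIntegral_nonneg measurableSet_Ioi fun _ ht => div_nonneg (exp_pos _).le (hx.trans ht).le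

lemma E1_le_exp_neg_div {x : ℝ} (hx : 0 < x) : E1 x ≤ exp (-x) / x :=
  calc E1 x ≤ ∫ t in Ioi x, exp (-t) / x :=
        setIntegral_mono_on (integrableOn_exp_neg_div_self_Ioi hx)
          ((integrableOn_exp_neg_Ioi x).div_const x) measurableSet_Ioi
          fun _ ht => exp_neg_div_self_le_exp_neg_div hx (le_of_lt ht)
    _ = exp (-x) / x := by rw [MeasureTheory.integral_div, integral_exp_neg_Ioi]

lemma tendsto_E1_atTop : Tendsto E1 atTop (𝓝 0) := by
  have hbound : Tendsto (fun x => exp (-x) / x) atTop (𝓝 0) := by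
    simpa [div_eq_mul_inv] using tendsto_exp_neg_atTop_nhds_zero.mul tendsto_inv_atTop_zero
  refine tendsto_of_tendsto_of_tendsto_of_le_of_le' tendsto_const_nhds hbound ?_ ?_
  · filter_upwards [eventually_gt_atTop 0] with x hx using E1_nonneg hx
  · filter_upwards [eventually_gt_atTop 0] with x hx using E1_le_exp_neg_div hx

lemma E1_sub_E1 {x y : ℝ} (hx : 0 < x) (hy : 0 < y) :
    E1 x - E1 y = ∫ t in x..y, exp (-t) / t := by
  have split : ∀ u v : ℝ, 0 < u → u ≤ v → E1 u = (∫ t in Ioc u v, exp (-t) / t) + E1 v := by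
    intro u v hu huv
    rw [E1, ← Ioc_union_Ioi_eq_Ioi huv, setIntegral_union (Ioc_disjoint_Ioi le_rfl)
      measurableSet_Ioi ((integrableOn_exp_neg_div_self_Ioi hu).mono_set Ioc_subset_Ioi_self)
      (integrableOn_exp_neg_div_self_Ioi (hu.trans_le huv)), E1]
  rcases le_total x y with h | h
  · rw [integral_of_le h, split x y hx h]; ring
  · rw [integral_of_ge h, split y x hy h]; ring

lemma hasDerivAt_E1 {x : ℝ} (hx : 0 < x) : HasDerivAt E1 (-(exp (-x) / x)) x := by
  have hx2 : 0 < x / 2 := half_pos hx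
  have hint : HasDerivAt (fun y => ∫ t in (x / 2)..y, exp (-t) / t) (exp (-x) / x) x := by
    refine integral_hasDerivAt_right ?_
      measurable_exp_neg_div_self.stronglyMeasurable.stronglyMeasurableAtFilter
      ((continuous_exp.comp continuous_neg).continuousAt.div continuousAt_id hx.ne')
    refine IntegrableOn.intervalIntegrable ?_
    rw [uIcc_of_le (half_le_self hx.le)]
    exact (integrableOn_exp_neg_div_self_Ioi (half_pos hx2)).mono_set
      fun t ht => (half_lt_self hx2).trans_le ht.1
  refine (hint.const_sub (E1 (x / 2))).congr_of_eventuallyEq ?_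
  filter_upwards [eventually_gt_nhds hx] with y hy
  rw [← E1_sub_E1 hx2 hy, sub_sub_cancel]

section HeatMoment

variable {a b σ : ℝ}

lemma hasDerivAt_E1_div (ha : 0 < a) (hσ : 0 < σ) :
    HasDerivAt (fun σ => E1 (a / σ)) (exp (-(a / σ)) / σ) σ := by
  have hdiv : HasDerivAt (fun σ => a / σ) (-a / σ ^ 2) σ := by
    simpa [div_eq_mul_inv, neg_div] using (hasDerivAt_inv hσ.ne').const_mul a
  exact ((hasDerivAt_E1 (div_pos ha hσ)).comp σ hdiv).congr_deriv (by field_simp)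

lemma exp_neg_div_div_sq_le (ha : 0 < a) (hσ : 0 < σ) : exp (-(a / σ)) / σ ^ 2 ≤ 2 / a ^ 2 := by
  have h := pow_div_factorial_le_exp _ (div_pos ha hσ).le 2
  rw [exp_neg, div_le_div_iff₀ (by positivity) (by positivity), inv_mul_le_iff₀ (exp_pos _)]
  rw [div_pow, Nat.factorial_two, div_div, div_le_iff₀ (by positivity)] at h
  push_cast at h
  linarith

noncomputable def heatMomentPrimitive (a b σ : ℝ) : ℝ :=
  (σ + b ^ 2 / a) * exp (-(a / σ)) + (2 * b - a) * E1 (a / σ)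

lemma hasDerivAt_heatMomentPrimitive (ha : 0 < a) (hσ : 0 < σ) :
    HasDerivAt (heatMomentPrimitive a b) (exp (-(a / σ)) * (b + σ) ^ 2 / σ ^ 2) σ := by
  have hexp : HasDerivAt (fun σ => exp (-(a / σ))) (exp (-(a / σ)) * (a / σ ^ 2)) σ := by
    simpa [div_eq_mul_inv] using ((hasDerivAt_inv hσ.ne').const_mul a).neg.exp
  refine ((((hasDerivAt_id' σ).add_const (b ^ 2 / a)).mul hexp).add
    ((hasDerivAt_E1_div ha hσ).const_mul (2 * b - a))).congr_deriv ?_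
  field_simp
  ring

lemma tendsto_heatMomentPrimitive_zero (ha : 0 < a) :
    Tendsto (heatMomentPrimitive a b) (𝓝[>] 0) (𝓝 0) := by
  have hdiv : Tendsto (fun σ => a / σ) (𝓝[>] 0) atTop := by
    simpa [div_eq_mul_inv] using tendsto_inv_nhdsGT_zero.const_mul_atTop ha
  have hlin : Tendsto (fun σ : ℝ => σ + b ^ 2 / a) (𝓝[>] 0) (𝓝 (0 + b ^ 2 / a)) :=
    (continuous_id.add continuous_const).continuousWithinAt.tendsto
  unfold heatMomentPrimitive
  simpa using (hlin.mul (tendsto_exp_neg_atTop_nhds_zero.comp hdiv)).add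
    ((tendsto_E1_atTop.comp hdiv).const_mul (2 * b - a))

lemma intervalIntegrable_heatMomentIntegrand (ha : 0 < a) {T : ℝ} (hT : 0 ≤ T) :
    IntervalIntegrable (fun σ => exp (-(a / σ)) * (b + σ) ^ 2 / σ ^ 2) volume 0 T := by
  rw [intervalIntegrable_iff_integrableOn_Ioc_of_le hT]
  refine (integrableOn_const (C := 2 / a ^ 2 * (|b| + T) ^ 2) measure_Ioc_lt_top.ne).mono'
    (Measurable.aestronglyMeasurable (by fun_prop)) ?_
  filter_upwards [ae_restrict_mem measurableSet_Ioc] with σ ⟨hσ, hσT⟩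
  have hsq : (b + σ) ^ 2 ≤ (|b| + T) ^ 2 :=
    sq_le_sq' (by linarith [neg_abs_le b]) (by linarith [le_abs_self b])
  rw [norm_of_nonneg (by positivity), mul_div_right_comm]
  exact mul_le_mul (exp_neg_div_div_sq_le ha hσ) hsq (sq_nonneg _) (by positivity)

lemma integral_heatMomentIntegrand (ha : 0 < a) {T : ℝ} (hT : 0 < T) :
    ∫ σ in (0 : ℝ)..T, exp (-(a / σ)) * (b + σ) ^ 2 / σ ^ 2 = heatMomentPrimitive a b T := by
  rw [integral_eq_sub_of_hasDerivAt_of_tendsto hT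
    (fun σ hσ => hasDerivAt_heatMomentPrimitive ha hσ.1)
    (intervalIntegrable_heatMomentIntegrand ha hT.le) (tendsto_heatMomentPrimitive_zero ha)
    (hasDerivAt_heatMomentPrimitive ha hT).continuousAt.continuousWithinAt.tendsto, sub_zero]

end HeatMoment

/-- the `j = 2` product-integration moment of the 2D heat kernel,
with `a = r²/4` and `c = r²/(4τᵢ)`. -/
theorem heat_moment_j2 (r τi α b : ℝ) (hr : 0 < r) (hτ : 0 < τi) :
    ∫ τ in α..(α + τi),
        Real.exp (-r ^ 2 / (4 * (α + τi - τ))) * (b + (α + τi - τ)) ^ 2 / (α + τi - τ) ^ 2 =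
      (τi + b ^ 2 / (r ^ 2 / 4)) * Real.exp (-(r ^ 2 / (4 * τi))) -
        E1 (r ^ 2 / (4 * τi)) * (r ^ 2 / 4 - 2 * b) := by
  have hexponent : ∀ σ : ℝ, -r ^ 2 / (4 * σ) = -(r ^ 2 / 4 / σ) := fun σ => by
    rw [div_div, neg_div]
  have hsubst := integral_comp_sub_left
    (fun σ => exp (-(r ^ 2 / 4 / σ)) * (b + σ) ^ 2 / σ ^ 2) (α + τi) (a := α) (b := α + τi)
  simp only [sub_self, add_sub_cancel_left] at hsubst
  simp only [hexponent]
  rw [hsubst, integral_heatMomentIntegrand (by positivity) hτ, heatMomentPrimitive, div_div]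
  ring
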